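/- Let N be a positive integer with N ≠ 4. For every Hall divisor Q of N, any Atkin–Lehner matrix w_Q = (1/√Q)·[[Qa, b],[Nc, Qd]] (a, b, c, d ∈ ℤ, determinant 1) normalizes the subgroup ±Γ₁(N) of SL(2,ℝ). Moreover, the full Atkin–Lehner matrix w_N = (1/√N)·[[0, −1],[N, 0]] satisfies w_N² = −I, so w_N induces an involution of Norm(Γ₁(N))/±Γ₁(N). -/

import Mathlib

open Matrix CongruenceSubgroup

/-- The reduction-of-scalars map `SL(2, ℤ) →* SL(2, ℝ)`. -/
def SL2ZtoSL2R : Matrix.SpecialLinearGroup (Fin 2) ℤ →* Matrix.SpecialLinearGroup (Fin 2) ℝ :=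
  Matrix.SpecialLinearGroup.map (Int.castRingHom ℝ)

/-- The subgroup `±Γ₁(N)` of `SL(2, ℝ)`, generated by the image of `Γ₁(N)` and `-1`. -/
def PMGamma1 (N : ℕ) : Subgroup (Matrix.SpecialLinearGroup (Fin 2) ℝ) :=
  (Gamma1 N).map SL2ZtoSL2R ⊔ Subgroup.zpowers (-1)

/-- `w` is an Atkin–Lehner matrix of level `N` for the Hall divisor `Q` of `N`:
a matrix of the form `(1/√Q)·!![Qa, b; Nc, Qd]` with integer entries (and determinant 1,
which holds automatically as `w ∈ SL(2, ℝ)`). -/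
def IsAtkinLehner (N Q : ℕ) (w : Matrix.SpecialLinearGroup (Fin 2) ℝ) : Prop :=
  ∃ a b c d : ℤ, (w : Matrix (Fin 2) (Fin 2) ℝ) =
    (Real.sqrt Q)⁻¹ • !![(Q : ℝ) * (a : ℝ), (b : ℝ); (N : ℝ) * (c : ℝ), (Q : ℝ) * (d : ℝ)]

lemma neg_one_zpow_sl (k : ℤ) : (-1 : Matrix.SpecialLinearGroup (Fin 2) ℝ) ^ k = 1 ∨
    (-1 : Matrix.SpecialLinearGroup (Fin 2) ℝ) ^ k = -1 := by
  have h2 : (-1 : Matrix.SpecialLinearGroup (Fin 2) ℝ) ^ (2 : ℤ) = 1 := by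
    rw [zpow_two]; simp
  have hk : (-1 : Matrix.SpecialLinearGroup (Fin 2) ℝ) ^ k
      = (-1 : Matrix.SpecialLinearGroup (Fin 2) ℝ) ^ (k % 2) := by
    conv_lhs => rw [← Int.emod_add_mul_ediv k 2]
    rw [_root_.zpow_add, _root_.zpow_mul, h2, _root_.one_zpow, mul_one]
  rcases Int.emod_two_eq k with h | h
  · left; rw [hk, h, zpow_zero]
  · right; rw [hk, h, zpow_one]

instance : (Subgroup.zpowers (-1 : Matrix.SpecialLinearGroup (Fin 2) ℝ)).Normal := by
  constructor
  intro n hn g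
  obtain ⟨k, rfl⟩ := hn
  rcases neg_one_zpow_sl k with h | h
  · exact ⟨0, by simp [h]⟩
  · exact ⟨1, by simp [h]⟩

lemma mem_PMGamma1_iff (N : ℕ) (u : Matrix.SpecialLinearGroup (Fin 2) ℝ) :
    u ∈ PMGamma1 N ↔ ∃ γ : Matrix.SpecialLinearGroup (Fin 2) ℤ, γ ∈ Gamma1 N ∧
      (u = SL2ZtoSL2R γ ∨ u = -(SL2ZtoSL2R γ)) := by
  constructor
  · intro hu
    rw [PMGamma1, ← SetLike.mem_coe, Subgroup.mul_normal] at hu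
    obtain ⟨x, hx, y, hy, rfl⟩ := hu
    obtain ⟨γ, hγ, rfl⟩ := hx
    obtain ⟨k, rfl⟩ := hy
    rcases neg_one_zpow_sl k with h | h
    · exact ⟨γ, hγ, Or.inl (by simp [h])⟩
    · exact ⟨γ, hγ, Or.inr (by simp [h])⟩
  · rintro ⟨γ, hγ, rfl | rfl⟩
    · exact Subgroup.mem_sup_left ⟨γ, hγ, rfl⟩
    · have h1 : SL2ZtoSL2R γ ∈ PMGamma1 N := Subgroup.mem_sup_left ⟨γ, hγ, rfl⟩
      have h2 : (-1 : Matrix.SpecialLinearGroup (Fin 2) ℝ) ∈ PMGamma1 N :=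
        Subgroup.mem_sup_right ⟨1, by simp⟩
      simpa [mul_neg_one] using (PMGamma1 N).mul_mem h1 h2

lemma SL2ZtoSL2R_coe (γ : Matrix.SpecialLinearGroup (Fin 2) ℤ) :
    ((SL2ZtoSL2R γ : Matrix.SpecialLinearGroup (Fin 2) ℝ) : Matrix (Fin 2) (Fin 2) ℝ) =
      !![((γ 0 0 : ℤ) : ℝ), ((γ 0 1 : ℤ) : ℝ); ((γ 1 0 : ℤ) : ℝ), ((γ 1 1 : ℤ) : ℝ)] := by
  ext i j
  fin_cases i <;> fin_cases j <;> simp [SL2ZtoSL2R] <;> rfl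

lemma conj_core (N Q : ℕ) (hN : 0 < N) (hQdvd : Q ∣ N)
    (w : Matrix.SpecialLinearGroup (Fin 2) ℝ) (hw : IsAtkinLehner N Q w)
    (γ : Matrix.SpecialLinearGroup (Fin 2) ℤ) (hγ : γ ∈ Gamma1 N) :
    ∃ γ' : Matrix.SpecialLinearGroup (Fin 2) ℤ, γ' ∈ Gamma1 N ∧
      SL2ZtoSL2R γ' = w * SL2ZtoSL2R γ * w⁻¹ := by
  obtain ⟨a, b, c, d, hwm⟩ := hw
  have hQ : 0 < Q := Nat.pos_of_dvd_of_pos hQdvd hN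
  set Q₂ : ℕ := N / Q with hQ₂def
  have hQQ : Q * Q₂ = N := Nat.mul_div_cancel' hQdvd
  have hQQZ : (Q : ℤ) * (Q₂ : ℤ) = N := by exact_mod_cast hQQ
  have hQR : (0 : ℝ) < Q := by exact_mod_cast hQ
  have hQRne : (Q : ℝ) ≠ 0 := ne_of_gt hQR
  have hsq : Real.sqrt Q * Real.sqrt Q = Q := Real.mul_self_sqrt (le_of_lt hQR)
  -- determinant of w
  have hdetR : (Q : ℝ) * a * ((Q : ℝ) * d) - (b : ℝ) * ((N : ℝ) * c) = Q := by
    have h := w.2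
    rw [hwm, Matrix.det_smul, Matrix.det_fin_two_of] at h
    have h2 : ((Real.sqrt Q)⁻¹) ^ Fintype.card (Fin 2) = (Q : ℝ)⁻¹ := by
      rw [Fintype.card_fin, inv_pow, sq, hsq]
    rw [h2] at h
    field_simp at h
    linarith [h]
  have hdetZ : (Q : ℤ) * a * ((Q : ℤ) * d) - b * ((N : ℤ) * c) = Q := by exact_mod_cast hdetR
  have h1 : (Q : ℤ) * (a * d) - (Q₂ : ℤ) * (b * c) = 1 := by
    have hQZne : (Q : ℤ) ≠ 0 := by exact_mod_cast hQ.ne'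
    apply mul_left_cancel₀ hQZne
    linear_combination hdetZ - (b * c) * hQQZ
  -- entries of γ
  set A : ℤ := γ 0 0 with hAdef
  set B : ℤ := γ 0 1 with hBdef
  set C : ℤ := γ 1 0 with hCdef
  set D : ℤ := γ 1 1 with hDdef
  have hmem := (Gamma1_mem N γ).1 hγ
  have ha₁ : ∃ a₁ : ℤ, A - 1 = N * a₁ := by
    have : ((A - 1 : ℤ) : ZMod N) = 0 := by
      rw [Int.cast_sub, Int.cast_one, show ((A : ℤ) : ZMod N) = 1 from hmem.1, sub_self]
    exact (ZMod.intCast_zmod_eq_zero_iff_dvd _ N).1 this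
  have hd₁ : ∃ d₁ : ℤ, D - 1 = N * d₁ := by
    have : ((D - 1 : ℤ) : ZMod N) = 0 := by
      rw [Int.cast_sub, Int.cast_one, show ((D : ℤ) : ZMod N) = 1 from hmem.2.1, sub_self]
    exact (ZMod.intCast_zmod_eq_zero_iff_dvd _ N).1 this
  have hc₁ : ∃ c₁ : ℤ, C = N * c₁ := by
    have : ((C : ℤ) : ZMod N) = 0 := hmem.2.2
    exact (ZMod.intCast_zmod_eq_zero_iff_dvd _ N).1 this
  obtain ⟨a₁, ha₁⟩ := ha₁
  obtain ⟨d₁, hd₁⟩ := hd₁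
  obtain ⟨c₁, hc₁⟩ := hc₁
  -- the conjugated integer matrix
  set A' : ℤ := (Q:ℤ) * (a*d) * A + b*d*C - (N:ℤ) * (a*c) * B - (Q₂:ℤ) * (b*c) * D with hA'
  set B' : ℤ := -(a*b) * A + (Q:ℤ) * (a*a) * B + a*b*D - (Q₂:ℤ) * (b*b) * c₁ with hB'
  set C' : ℤ := (N:ℤ) * (c*d) * A + (Q:ℤ) * (d*d) * C - (N:ℤ) * (Q₂:ℤ) * (c*c) * B
      - (N:ℤ) * (c*d) * D with hC'
  set D' : ℤ := -((Q₂:ℤ) * (b*c)) * A - b*d*C + (N:ℤ) * (a*c) * B + (Q:ℤ) * (a*d) * D with hD'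
  -- the inverse of w
  have hwinv : ((w⁻¹ : Matrix.SpecialLinearGroup (Fin 2) ℝ) : Matrix (Fin 2) (Fin 2) ℝ) =
      (Real.sqrt Q)⁻¹ • !![(Q:ℝ) * d, -(b:ℝ); -((N:ℝ) * c), (Q:ℝ) * a] := by
    rw [Matrix.SpecialLinearGroup.coe_inv, hwm, Matrix.adjugate_smul,
      Matrix.adjugate_fin_two_of]
    norm_num
  have hNR : (N : ℝ) = (Q : ℝ) * (Q₂ : ℝ) := by exact_mod_cast hQQ.symm
  have hCγ : (γ 1 0 : ℤ) = (N : ℤ) * c₁ := hc₁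
  have hCR : ((γ 1 0 : ℤ) : ℝ) = (N : ℝ) * (c₁ : ℝ) := by exact_mod_cast hCγ
  -- the key matrix identity
  have hkey : ((w * SL2ZtoSL2R γ * w⁻¹ : Matrix.SpecialLinearGroup (Fin 2) ℝ) :
      Matrix (Fin 2) (Fin 2) ℝ) =
      !![((A' : ℤ) : ℝ), ((B' : ℤ) : ℝ); ((C' : ℤ) : ℝ), ((D' : ℤ) : ℝ)] := by
    rw [Matrix.SpecialLinearGroup.coe_mul, Matrix.SpecialLinearGroup.coe_mul,
      hwm, hwinv, SL2ZtoSL2R_coe]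
    rw [Matrix.smul_mul, Matrix.smul_mul, Matrix.mul_smul, smul_smul]
    have hss : (Real.sqrt Q)⁻¹ * (Real.sqrt Q)⁻¹ = (Q : ℝ)⁻¹ := by
      rw [← mul_inv, hsq]
    rw [hss, inv_smul_eq_iff₀ hQRne]
    ext i j
    fin_cases i <;> fin_cases j <;>
      · simp [Matrix.mul_apply, Fin.sum_univ_two]
        push_cast [hA', hB', hC', hD', hAdef, hBdef, hCdef, hDdef, hCR, hNR]
        ring
  -- determinant of the integer matrix
  have hdetM : A' * D' - B' * C' = 1 := by
    have h := (w * SL2ZtoSL2R γ * w⁻¹).2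
    rw [hkey, Matrix.det_fin_two_of] at h
    exact_mod_cast h
  have hdet2 : (!![A', B'; C', D'] : Matrix (Fin 2) (Fin 2) ℤ).det = 1 := by
    rw [Matrix.det_fin_two_of]; exact hdetM
  refine ⟨⟨!![A', B'; C', D'], hdet2⟩, ?_, ?_⟩
  · refine (Gamma1_mem N _).2 ?_
    refine ⟨show ((A' : ℤ) : ZMod N) = 1 from ?_, show ((D' : ℤ) : ZMod N) = 1 from ?_,
      show ((C' : ℤ) : ZMod N) = 0 from ?_⟩
    · have : ((A' - 1 : ℤ) : ZMod N) = 0 := by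
        refine (ZMod.intCast_zmod_eq_zero_iff_dvd _ N).2
          ⟨(Q:ℤ)*(a*d)*a₁ + b*d*c₁ - a*c*B - (Q₂:ℤ)*(b*c)*d₁, ?_⟩
        linear_combination ((Q:ℤ)*a*d) * ha₁ + (b*d) * hc₁ - ((Q₂:ℤ)*b*c) * hd₁ + h1
      push_cast at this
      linear_combination this
    · have : ((D' - 1 : ℤ) : ZMod N) = 0 := by
        refine (ZMod.intCast_zmod_eq_zero_iff_dvd _ N).2
          ⟨-((Q₂:ℤ)*(b*c))*a₁ - b*d*c₁ + a*c*B + (Q:ℤ)*(a*d)*d₁, ?_⟩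
        linear_combination (-(Q₂:ℤ)*b*c) * ha₁ - (b*d) * hc₁ + ((Q:ℤ)*a*d) * hd₁ + h1
      push_cast at this
      linear_combination this
    · refine (ZMod.intCast_zmod_eq_zero_iff_dvd _ N).2
        ⟨c*d*A + (Q:ℤ)*(d*d)*c₁ - (Q₂:ℤ)*(c*c)*B - c*d*D, ?_⟩
      linear_combination ((Q:ℤ)*d*d) * hc₁
  · refine Subtype.ext ?_
    rw [hkey]; refine (SL2ZtoSL2R_coe _).trans ?_
    ext i j
    fin_cases i <;> fin_cases j <;> rfl

lemma isAtkinLehner_inv (N Q : ℕ) (w : Matrix.SpecialLinearGroup (Fin 2) ℝ)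
    (hw : IsAtkinLehner N Q w) : IsAtkinLehner N Q w⁻¹ := by
  obtain ⟨a, b, c, d, h⟩ := hw
  refine ⟨d, -b, -c, a, ?_⟩
  rw [Matrix.SpecialLinearGroup.coe_inv, h, Matrix.adjugate_smul, Matrix.adjugate_fin_two_of]
  norm_num

lemma conj_mem (N Q : ℕ) (hN : 0 < N) (hQdvd : Q ∣ N)
    (w : Matrix.SpecialLinearGroup (Fin 2) ℝ) (hw : IsAtkinLehner N Q w)
    {u : Matrix.SpecialLinearGroup (Fin 2) ℝ} (hu : u ∈ PMGamma1 N) :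
    w * u * w⁻¹ ∈ PMGamma1 N := by
  rw [mem_PMGamma1_iff] at hu ⊢
  obtain ⟨γ, hγ, rfl | rfl⟩ := hu
  · obtain ⟨γ', hγ', he⟩ := conj_core N Q hN hQdvd w hw γ hγ
    exact ⟨γ', hγ', Or.inl he.symm⟩
  · obtain ⟨γ', hγ', he⟩ := conj_core N Q hN hQdvd w hw γ hγ
    refine ⟨γ', hγ', Or.inr ?_⟩
    rw [he]
    simp [mul_neg, neg_mul]

/-- For `N ≠ 4`: every Atkin–Lehner matrix `w_Q` for a Hall divisor `Q` of `N` normalizes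
`±Γ₁(N)`, and the full Atkin–Lehner matrix `w_N = (1/√N)·!![0, -1; N, 0]` satisfies
`w_N² = -1`, so `w_N` induces an involution of `Norm(Γ₁(N))/±Γ₁(N)`. -/
theorem atkinLehner_normalizes_Gamma1
    (N : ℕ) (hN : 0 < N) (hN4 : N ≠ 4) :
    (∀ Q : ℕ, Q ∣ N → Nat.gcd Q (N / Q) = 1 →
      ∀ w : Matrix.SpecialLinearGroup (Fin 2) ℝ, IsAtkinLehner N Q w →
        w ∈ Subgroup.normalizer (PMGamma1 N)) ∧
    (∀ wN : Matrix.SpecialLinearGroup (Fin 2) ℝ,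
      (wN : Matrix (Fin 2) (Fin 2) ℝ) = (Real.sqrt N)⁻¹ • !![0, -1; (N : ℝ), 0] →
        wN ^ 2 = -1) := by
  constructor
  · intro Q hQdvd _hgcd w hw
    rw [Subgroup.mem_normalizer_iff]
    intro h
    constructor
    · intro hh
      exact conj_mem N Q hN hQdvd w hw hh
    · intro hh
      have hwinv := isAtkinLehner_inv N Q w hw
      have h2 := conj_mem N Q hN hQdvd w⁻¹ hwinv hh
      have e : w⁻¹ * (w * h * w⁻¹) * w⁻¹⁻¹ = h := by group
      rwa [e] at h2
  · intro wN hwN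
    have hNR : (0:ℝ) ≤ N := by positivity
    have hNne : (N:ℝ) ≠ 0 := by
      have : (0:ℝ) < N := by exact_mod_cast hN
      exact ne_of_gt this
    have hsq : Real.sqrt N * Real.sqrt N = N := Real.mul_self_sqrt hNR
    apply Subtype.ext
    have hpow : ((wN ^ 2 : Matrix.SpecialLinearGroup (Fin 2) ℝ) : Matrix (Fin 2) (Fin 2) ℝ)
        = (wN : Matrix (Fin 2) (Fin 2) ℝ) * (wN : Matrix (Fin 2) (Fin 2) ℝ) := by
      rw [pow_two, Matrix.SpecialLinearGroup.coe_mul]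
    rw [hpow, hwN, Matrix.smul_mul, Matrix.mul_smul, smul_smul]
    have hss : (Real.sqrt N)⁻¹ * (Real.sqrt N)⁻¹ = (N : ℝ)⁻¹ := by
      rw [← mul_inv, hsq]
    rw [hss]
    have hcoe : ((-1 : Matrix.SpecialLinearGroup (Fin 2) ℝ) : Matrix (Fin 2) (Fin 2) ℝ)
        = -(1 : Matrix (Fin 2) (Fin 2) ℝ) := by
      rw [Matrix.SpecialLinearGroup.coe_neg, Matrix.SpecialLinearGroup.coe_one]
    rw [hcoe]
    ext i j
    fin_cases i <;> fin_cases j <;>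
        simp [Matrix.mul_apply, Fin.sum_univ_two, Matrix.one_apply] <;>
      field_simp
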